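/- arXiv:1209.2238 — 5 statements merged into one kernel-verified Lean document; each statement's English description precedes it below -/
import Mathlib

section
/- Contract automata are monotonic: if 𝒜 and 𝒜' are structurally isomorphic contract automata over Σ with contract clause functions contract and contract' respectively, and for every state q one has contract(q) ⊆ contract'(q), then 𝒜 ⊑ 𝒜'. -/
namespace TwoParty

/-- Parties: `true` is party 1, `false` is party 2; `!p` is the other party `p̄`. -/
abbrev Party := Bool

/-- The extended alphabet `Σ!`: an action `a` of `Σ` or its absence `!a`. -/
inductive ExtAct (Act : Type) : Type
  | pos (a : Act)
  | neg (a : Act)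

/-- The involution `!` on extended actions, with `!(!a) = a`. -/
def negExt {Act : Type} : ExtAct Act → ExtAct Act
  | .pos a => .neg a
  | .neg a => .pos a

/-- Contract clauses over `Act`: obligations `𝒪_p(x)` and permissions `𝒫_p(x)`. -/
inductive Clause (Act : Type) : Type
  | obl (p : Party) (x : ExtAct Act)
  | perm (p : Party) (x : ExtAct Act)

/-- Syntactic negation of clauses:
`!𝒫_p(a) = 𝒪_p(!a)`, `!𝒫_p(!a) = 𝒪_p(a)`, `!𝒪_p(a) = 𝒫_p(!a)`, `!𝒪_p(!a) = 𝒫_p(a)`. -/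
def negClause {Act : Type} : Clause Act → Clause Act
  | .obl p x => .perm p (negExt x)
  | .perm p x => .obl p (negExt x)

/-- A multi-action automaton over alphabet `Act` with state type `Q`:
an initial state and a transition relation labelled by action sets. -/
structure MAA (Act Q : Type) where
  init : Q
  trans : Q → Set Act → Q → Prop

/-- `acts(q)`: the action sets on the outgoing transitions from `q`. -/
def MAA.acts {Act Q : Type} (S : MAA Act Q) (q : Q) : Set (Set Act) :=
  {A | ∃ q', S.trans q A q'}

/-- Transition relation of the synchronous composition `S1 ∥_G S2`. -/
def syncTrans {Act Q1 Q2 : Type} (S1 : MAA Act Q1) (S2 : MAA Act Q2) (G : Set Act) :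
    Q1 × Q2 → Set Act → Q1 × Q2 → Prop := fun q A q' =>
  (S1.trans q.1 A q'.1 ∧ A ∩ G = ∅ ∧ q'.2 = q.2) ∨
  (S2.trans q.2 A q'.2 ∧ A ∩ G = ∅ ∧ q'.1 = q.1) ∨
  (∃ B C, A = B ∪ C ∧ S1.trans q.1 B q'.1 ∧ S2.trans q.2 C q'.2 ∧
    B ∩ G = C ∩ G ∧ B ∩ G ≠ ∅)

/-- A contract automaton: a total, deterministic multi-action automaton together
with a set of contract clauses attached to each state. -/
structure CA (Act QA : Type) where
  init : QA
  trans : QA → Set Act → QA → Prop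
  total : ∀ q A, ∃ q', trans q A q'
  det : ∀ q A q' q'', trans q A q' → trans q A q'' → q' = q''
  contract : QA → Set (Clause Act)

/-- Structurally isomorphic contract automata: same state set, initial state and
transition relation (but possibly different contract functions). -/
def StructIso {Act QA : Type} (ca ca' : CA Act QA) : Prop :=
  ca.init = ca'.init ∧ ca.trans = ca'.trans

/-- `O_p(q)`: the actions party `p` is obliged to perform at contract state `q`. -/
def CA.oblig {Act QA : Type} (ca : CA Act QA) (p : Party) (q : QA) : Set Act :=
  {a | Clause.obl p (.pos a) ∈ ca.contract q}

/-- `F_p(q)`: the actions party `p` is obliged not to perform at contract state `q`. -/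
def CA.forb {Act QA : Type} (ca : CA Act QA) (p : Party) (q : QA) : Set Act :=
  {a | Clause.obl p (.neg a) ∈ ca.contract q}

/-- `viable_p(q, A)`: all of `p`'s obliged actions are in `A` and none of its
forbidden actions is in `A`. -/
def CA.viable {Act QA : Type} (ca : CA Act QA) (p : Party) (q : QA) (A : Set Act) : Prop :=
  ca.oblig p q ⊆ A ∧ ca.forb p q ∩ A = ∅

section Sat

variable {Act Q1 Q2 QA : Type}

/-- `acts` of party `p`'s own automaton component at a composed state. -/
def pActs (S1 : MAA Act Q1) (S2 : MAA Act Q2) (p : Party) (q : Q1 × Q2) :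
    Set (Set Act) :=
  cond p (S1.acts q.1) (S2.acts q.2)

/-- The transition is performed asynchronously by the party other than `p` alone. -/
def asyncOther (S1 : MAA Act Q1) (S2 : MAA Act Q2) (G : Set Act) (p : Party)
    (q : Q1 × Q2) (A : Set Act) (q' : Q1 × Q2) : Prop :=
  cond p (S2.trans q.2 A q'.2 ∧ A ∩ G = ∅ ∧ q'.1 = q.1)
         (S1.trans q.1 A q'.1 ∧ A ∩ G = ∅ ∧ q'.2 = q.2)

/-- Satisfaction, by party `p`, of a single permission `𝒫_{!p}(x)` of the other
party at a composed state with components `q` and contract state `qA`. -/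
def satPerm (ca : CA Act QA) (S1 : MAA Act Q1) (S2 : MAA Act Q2) (G : Set Act)
    (p : Party) (q : Q1 × Q2) (qA : QA) : ExtAct Act → Prop
  | .pos a => a ∈ G →
      ∃ A ∈ pActs S1 S2 p q, ∃ A', A' ⊆ Gᶜ ∧ a ∈ A ∧ ca.viable (!p) qA (A ∪ A')
  | .neg a => a ∈ G →
      ∃ A ∈ pActs S1 S2 p q, ∃ A', A' ⊆ Gᶜ ∧ a ∉ A ∧ ca.viable (!p) qA (A ∪ A')

/-- `sat^𝒜_p` on states: the permission part (all permissions of the other party)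
together with the obligation part (`p` offers a viable action set for `!p`). -/
def satState (ca : CA Act QA) (S1 : MAA Act Q1) (S2 : MAA Act Q2) (G : Set Act)
    (p : Party) (s : (Q1 × Q2) × QA) : Prop :=
  (∀ x, Clause.perm (!p) x ∈ ca.contract s.2 → satPerm ca S1 S2 G p s.1 s.2 x) ∧
  (∃ A ∈ pActs S1 S2 p s.1, ∃ A', A' ⊆ Gᶜ ∧ ca.viable (!p) s.2 (A ∪ A'))

/-- `sat^𝒜_p` on transitions: every transition in which `p` participates (i.e.
which is not an asynchronous move of the other party alone) must be viable for `p`. -/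
def satTrans (ca : CA Act QA) (S1 : MAA Act Q1) (S2 : MAA Act Q2) (G : Set Act)
    (p : Party) (s : (Q1 × Q2) × QA) (A : Set Act) (s' : (Q1 × Q2) × QA) : Prop :=
  ¬ asyncOther S1 S2 G p s.1 A s'.1 → ca.viable p s.2 A

/-- Transitions of the behaviour `(S1 ∥_G S2) ∥_Σ 𝒜` (the contract automaton,
being total, synchronises on every action set and merely tags the behaviour). -/
def behTrans (ca : CA Act QA) (S1 : MAA Act Q1) (S2 : MAA Act Q2) (G : Set Act)
    (s : (Q1 × Q2) × QA) (A : Set Act) (s' : (Q1 × Q2) × QA) : Prop :=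
  syncTrans S1 S2 G s.1 A s'.1 ∧ ca.trans s.2 A s'.2

/-- Reachable states of the behaviour of `⟨S1,S2⟩^𝒜_G`. -/
def behReach (ca : CA Act QA) (S1 : MAA Act Q1) (S2 : MAA Act Q2) (G : Set Act) :
    Set ((Q1 × Q2) × QA) :=
  {s | Relation.ReflTransGen (fun t t' => ∃ A, behTrans ca S1 S2 G t A t')
        ((S1.init, S2.init), ca.init) s}

/-- Reachable states of `S1 ∥_G S2`. -/
def sysReach (S1 : MAA Act Q1) (S2 : MAA Act Q2) (G : Set Act) : Set (Q1 × Q2) :=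
  {q | Relation.ReflTransGen (fun t t' => ∃ A, syncTrans S1 S2 G t A t')
        (S1.init, S2.init) q}

/-- Well-formedness: `S1 ∥_G S2` never deadlocks. -/
def WellFormed (S1 : MAA Act Q1) (S2 : MAA Act Q2) (G : Set Act) : Prop :=
  ∀ q ∈ sysReach S1 S2 G, ∃ A q', syncTrans S1 S2 G q A q'

/-- `bi_p(⟨S1,S2⟩^𝒜_G)`: party `p` is breach-incapable, i.e. `sat^𝒜_p` holds on
every reachable state and on every transition out of a reachable state. -/
def bi (ca : CA Act QA) (S1 : MAA Act Q1) (S2 : MAA Act Q2) (G : Set Act)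
    (p : Party) : Prop :=
  (∀ s ∈ behReach ca S1 S2 G, satState ca S1 S2 G p s) ∧
  (∀ s ∈ behReach ca S1 S2 G, ∀ A s', behTrans ca S1 S2 G s A s' →
      satTrans ca S1 S2 G p s A s')

end Sat

/-- `𝒜 ⊑_p 𝒜'`: for all well-formed systems, breach-incapability of `p` under `𝒜'`
implies breach-incapability of `p` under `𝒜`. -/
def caLE {Act QA QA' : Type} (p : Party) (ca : CA Act QA) (ca' : CA Act QA') : Prop :=
  ∀ (Q1 Q2 : Type) (S1 : MAA Act Q1) (S2 : MAA Act Q2) (G : Set Act),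
    WellFormed S1 S2 G → bi ca' S1 S2 G p → bi ca S1 S2 G p

/-- `(𝒜,𝒜') ∈ [C → C']`: structurally isomorphic, with the contract function of `𝒜'`
obtained from that of `𝒜` by replacing some (possibly zero) occurrences of `C` by `C'`. -/
def Replace {Act QA : Type} (C C' : Clause Act) (ca ca' : CA Act QA) : Prop :=
  StructIso ca ca' ∧
  ∀ q, ca'.contract q = ca.contract q ∨
    (C ∈ ca.contract q ∧ ca'.contract q = insert C' (ca.contract q \ {C}))

/-- Clause strictness `C ⊑ C'` (for both parties). -/
def clauseLE {Act : Type} (C C' : Clause Act) : Prop :=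
  ∀ (QA : Type) (ca ca' : CA Act QA), Replace C C' ca ca' → ∀ p : Party, caLE p ca ca'

/-- No transition label of the relation `r` contains both `a` and `b`. -/
def MutexRel {Act Q : Type} (r : Q → Set Act → Q → Prop) (a b : Act) : Prop :=
  ∀ q A q', r q A q' → ¬ (a ∈ A ∧ b ∈ A)

/-- The conflict relation `✗` on contract clauses, parametrised by a
mutual-exclusion relation `mx` on actions: the least relation closed under the
four axioms. -/
inductive Conflict {Act : Type} (mx : Act → Act → Prop) : Clause Act → Clause Act → Prop
  | perm_neg (p : Party) (x : ExtAct Act) :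
      Conflict mx (.perm p x) (negClause (.perm p x))
  | mutex_obl (p : Party) {a b : Act} (h : mx a b) :
      Conflict mx (.obl p (.pos a)) (.obl p (.pos b))
  | symm {C C' : Clause Act} (h : Conflict mx C C') : Conflict mx C' C
  | strict {C C' C'' : Clause Act} (h : Conflict mx C C') (hle : clauseLE C' C'') :
      Conflict mx C C''


/-- contract automata are monotonic: if `𝒜` and `𝒜'` are
structurally isomorphic and `contract(q) ⊆ contract'(q)` for every state `q`,
then `𝒜 ⊑ 𝒜'`. -/
theorem ca_monotonic (Act QA : Type) (ca ca' : CA Act QA)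
    (hiso : StructIso ca ca')
    (hsub : ∀ q, ca.contract q ⊆ ca'.contract q) :
    ∀ p : Party, caLE p ca ca' := by
  -- viability under ca' implies viability under ca
  have hviab : ∀ (p : Party) (q : QA) (A : Set Act),
      ca'.viable p q A → ca.viable p q A := by
    intro p q A ⟨ho, hf⟩
    constructor
    · intro a ha; exact ho (hsub q ha)
    · apply Set.eq_empty_iff_forall_notMem.2
      intro a ⟨haf, haA⟩
      exact Set.eq_empty_iff_forall_notMem.1 hf a ⟨hsub q haf, haA⟩
  intro p Q1 Q2 S1 S2 G _ hbi
  obtain ⟨hiso_init, hiso_trans⟩ := hiso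
  -- reachable sets coincide
  have hreach : behReach ca S1 S2 G = behReach ca' S1 S2 G := by
    unfold behReach behTrans
    rw [hiso_init, hiso_trans]
  obtain ⟨hbiS, hbiT⟩ := hbi
  constructor
  · intro s hs
    have hs' := hbiS s (hreach ▸ hs)
    obtain ⟨hP, ⟨A, hA, A', hA', hv⟩⟩ := hs'
    constructor
    · intro x hx
      have hx' : Clause.perm (!p) x ∈ ca'.contract s.2 := hsub s.2 hx
      have := hP x hx'
      cases x with
      | pos a =>
        intro haG
        obtain ⟨B, hB, B', hB', haB, hv⟩ := this haG
        exact ⟨B, hB, B', hB', haB, hviab _ _ _ hv⟩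
      | neg a =>
        intro haG
        obtain ⟨B, hB, B', hB', haB, hv⟩ := this haG
        exact ⟨B, hB, B', hB', haB, hviab _ _ _ hv⟩
    · exact ⟨A, hA, A', hA', hviab _ _ _ hv⟩
  · intro s hs A s' ht hasync
    have ht' : behTrans ca' S1 S2 G s A s' := by
      unfold behTrans at ht ⊢
      rw [← hiso_trans]; exact ht
    exact hviab _ _ _ (hbiT s (hreach ▸ hs) A s' ht' hasync)

end TwoParty
end

section
/- Obligation is stricter than permission (positive action): for every action a ∈ Σ and party p, the clause 𝒪_p(a) is stricter than the clause 𝒫_p(a), i.e., 𝒫_p(a) ⊑ 𝒪_p(a): for every pair of contract automata (𝒜, 𝒜') related by [𝒫_p(a) → 𝒪_p(a)], one has 𝒜 ⊑ 𝒜'. -/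
namespace TwoParty

/-!
Replacing `𝒫_p(a)` by `𝒪_p(a)` only enlarges obligation sets and leaves forbidden sets and the
behaviour unchanged, so viability under `𝒜'` implies viability under `𝒜`. The one clause that
disappears, `𝒫_p(a)`, is still honoured: under `𝒜'` the other party must offer a set `A ∪ A'`
viable for `p`, which contains the now obligatory `a`; as `A'` avoids `G`, a synchronised `a`
lies in the offered `A`.
-/

section Strictness

variable {Act QA Q1 Q2 : Type} {ca ca' : CA Act QA}

theorem StructIso.behTrans_eq (h : StructIso ca ca') (S1 : MAA Act Q1) (S2 : MAA Act Q2)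
    (G : Set Act) : behTrans ca S1 S2 G = behTrans ca' S1 S2 G := by
  unfold behTrans
  rw [h.2]

theorem StructIso.behReach_eq (h : StructIso ca ca') (S1 : MAA Act Q1) (S2 : MAA Act Q2)
    (G : Set Act) : behReach ca S1 S2 G = behReach ca' S1 S2 G := by
  unfold behReach
  rw [h.1, h.behTrans_eq]

theorem Replace.mem_or_of_mem {C C' D : Clause Act} (h : Replace C C' ca ca') {q : QA}
    (hD : D ∈ ca.contract q) : D ∈ ca'.contract q ∨ (D = C ∧ C' ∈ ca'.contract q) := by
  rcases h.2 q with h' | ⟨-, h'⟩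
  · exact .inl (h' ▸ hD)
  · rw [h']
    by_cases hDC : D = C
    · exact .inr ⟨hDC, Set.mem_insert _ _⟩
    · exact .inl (Set.mem_insert_of_mem _ ⟨hD, hDC⟩)

theorem Replace.mem_of_mem_of_ne {C C' D : Clause Act} (h : Replace C C' ca ca') {q : QA}
    (hD : D ∈ ca.contract q) (hne : D ≠ C) : D ∈ ca'.contract q :=
  (h.mem_or_of_mem hD).resolve_right fun h' => hne h'.1

theorem Replace.viable_of_viable {r : Party} {x : ExtAct Act} {C' : Clause Act}
    (h : Replace (.perm r x) C' ca ca') {p : Party} {q : QA} {A : Set Act}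
    (hv : ca'.viable p q A) : ca.viable p q A := by
  have hF : ca.forb p q ⊆ ca'.forb p q := fun _ hb => h.mem_of_mem_of_ne hb (by simp)
  exact ⟨fun _ hb => hv.1 (h.mem_of_mem_of_ne hb (by simp)),
    Set.subset_empty_iff.mp ((Set.inter_subset_inter_left A hF).trans hv.2.subset)⟩

theorem satPerm_mono {S1 : MAA Act Q1} {S2 : MAA Act Q2} {G : Set Act} {p : Party}
    {q : Q1 × Q2} {qA : QA} {x : ExtAct Act}
    (hv : ∀ A, ca'.viable (!p) qA A → ca.viable (!p) qA A)
    (hx : satPerm ca' S1 S2 G p q qA x) : satPerm ca S1 S2 G p q qA x := by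
  cases x <;>
  · intro hG
    obtain ⟨A, hA, A', hA'G, hxA, hvA⟩ := hx hG
    exact ⟨A, hA, A', hA'G, hxA, hv _ hvA⟩

theorem satPerm_pos_of_mem_oblig {S1 : MAA Act Q1} {S2 : MAA Act Q2} {G : Set Act}
    {p : Party} {q : Q1 × Q2} {qA : QA} {a : Act} (ha : a ∈ ca.oblig (!p) qA)
    (hO : ∃ A ∈ pActs S1 S2 p q, ∃ A', A' ⊆ Gᶜ ∧ ca.viable (!p) qA (A ∪ A')) :
    satPerm ca S1 S2 G p q qA (.pos a) := by
  obtain ⟨A, hA, A', hA'G, hv⟩ := hO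
  intro haG
  have haA : a ∈ A := (hv.1 ha).resolve_right fun haA' => hA'G haA' haG
  exact ⟨A, hA, A', hA'G, haA, hv⟩

theorem satState_of_replace_perm_obl {r : Party} {a : Act}
    (h : Replace (.perm r (.pos a)) (.obl r (.pos a)) ca ca') {S1 : MAA Act Q1}
    {S2 : MAA Act Q2} {G : Set Act} {p : Party} {s : (Q1 × Q2) × QA}
    (hs : satState ca' S1 S2 G p s) : satState ca S1 S2 G p s := by
  obtain ⟨hP, hO⟩ := hs
  have hv : ∀ A, ca'.viable (!p) s.2 A → ca.viable (!p) s.2 A := fun _ => h.viable_of_viable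
  refine ⟨fun x hx => ?_, ?_⟩
  · rcases h.mem_or_of_mem hx with hx' | ⟨hxC, hobl⟩
    · exact satPerm_mono hv (hP x hx')
    · obtain ⟨rfl, rfl⟩ := Clause.perm.inj hxC
      exact satPerm_mono hv (satPerm_pos_of_mem_oblig hobl hO)
  · obtain ⟨A, hA, A', hA'G, hvA⟩ := hO
    exact ⟨A, hA, A', hA'G, hv _ hvA⟩

end Strictness

/-- obligation is stricter than permission (positive action):
`𝒫_p(a) ⊑ 𝒪_p(a)`, i.e. any two contract automata related by
`[𝒫_p(a) → 𝒪_p(a)]` satisfy `𝒜 ⊑ 𝒜'`. -/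
theorem obligation_stricter_than_permission_pos (Act : Type) (a : Act) (p : Party) :
    ∀ (QA : Type) (ca ca' : CA Act QA),
      Replace (Clause.perm p (.pos a)) (Clause.obl p (.pos a)) ca ca' →
      ∀ q : Party, caLE q ca ca' := by
  intro QA ca ca' hR q Q1 Q2 S1 S2 G _ ⟨hStates, hTrans⟩
  have hReach := hR.1.behReach_eq S1 S2 G
  refine ⟨fun s hs => satState_of_replace_perm_obl hR (hStates s (hReach ▸ hs)), ?_⟩
  intro s hs A s' hst hasync
  exact hR.viable_of_viable
    (hTrans s (hReach ▸ hs) A s' (hR.1.behTrans_eq S1 S2 G ▸ hst) hasync)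

end TwoParty
end

section
/- Obligation is stricter than permission (negated action): for every action a ∈ Σ and party p, the clause 𝒪_p(!a) is stricter than the clause 𝒫_p(!a), i.e., 𝒫_p(!a) ⊑ 𝒪_p(!a): for every pair of contract automata (𝒜, 𝒜') related by [𝒫_p(!a) → 𝒪_p(!a)], one has 𝒜 ⊑ 𝒜'. -/
namespace TwoParty

/-- obligation is stricter than permission (negated action):
`𝒫_p(!a) ⊑ 𝒪_p(!a)`, i.e. any two contract automata related by
`[𝒫_p(!a) → 𝒪_p(!a)]` satisfy `𝒜 ⊑ 𝒜'`. -/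
theorem obligation_stricter_than_permission_neg (Act : Type) (a : Act) (p : Party) :
    ∀ (QA : Type) (ca ca' : CA Act QA),
      Replace (Clause.perm p (.neg a)) (Clause.obl p (.neg a)) ca ca' →
      ∀ q : Party, caLE q ca ca' := by
  rintro QA ca ca' ⟨⟨hinit, htrans⟩, hrep⟩ q
  intro Q1 Q2 S1 S2 G _hwf hbi'
  obtain ⟨hbiS, hbiT⟩ := hbi'
  -- obligations (positive) coincide
  have hOblEq : ∀ (r : Party) (b : Act) (qA : QA),
      Clause.obl r (.pos b) ∈ ca.contract qA ↔ Clause.obl r (.pos b) ∈ ca'.contract qA := by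
    intro r b qA
    rcases hrep qA with h | ⟨_, heq⟩
    · rw [h]
    · rw [heq]; simp
  -- forbidden sets only grow
  have hForbMono : ∀ (r : Party) (b : Act) (qA : QA),
      Clause.obl r (.neg b) ∈ ca.contract qA → Clause.obl r (.neg b) ∈ ca'.contract qA := by
    intro r b qA hb
    rcases hrep qA with h | ⟨_, heq⟩
    · rw [h]; exact hb
    · rw [heq]; exact Set.mem_insert_iff.mpr (Or.inr ⟨hb, by simp⟩)
  -- viability under ca' implies viability under ca
  have hviable : ∀ (r : Party) (qA : QA) (A : Set Act),
      ca'.viable r qA A → ca.viable r qA A := by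
    rintro r qA A ⟨ho, hf⟩
    constructor
    · intro b hb
      exact ho ((hOblEq r b qA).mp hb)
    · rw [Set.eq_empty_iff_forall_notMem]
      intro b hb
      have : b ∈ ca'.forb r qA ∩ A := ⟨hForbMono r b qA hb.1, hb.2⟩
      rw [hf] at this
      exact this
    -- permission clauses of ca: either unchanged or the replaced one
  have hPerm : ∀ (r : Party) (x : ExtAct Act) (qA : QA),
      Clause.perm r x ∈ ca.contract qA →
      Clause.perm r x ∈ ca'.contract qA ∨
        (r = p ∧ x = .neg a ∧ Clause.obl p (.neg a) ∈ ca'.contract qA) := by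
    intro r x qA hx
    rcases hrep qA with h | ⟨_, heq⟩
    · left; rw [h]; exact hx
    · by_cases hc : Clause.perm r x = Clause.perm (Act := Act) p (.neg a)
      · right
        obtain ⟨hr, hxa⟩ : r = p ∧ x = ExtAct.neg a := by
          injection hc with h1 h2; exact ⟨h1, h2⟩
        exact ⟨hr, hxa, by rw [heq]; exact Set.mem_insert _ _⟩
      · left; rw [heq]
        exact Set.mem_insert_iff.mpr (Or.inr ⟨hx, by simpa using hc⟩)
  -- behaviour is the same
  have hbt : behTrans ca S1 S2 G = behTrans ca' S1 S2 G := by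
    funext s A s'
    unfold behTrans
    rw [htrans]
  have hbr : behReach ca S1 S2 G = behReach ca' S1 S2 G := by
    unfold behReach
    rw [hbt, hinit]
  constructor
  · -- states
    intro s hs
    have hs' : s ∈ behReach ca' S1 S2 G := hbr ▸ hs
    obtain ⟨hP', hO'⟩ := hbiS s hs'
    constructor
    · intro x hx
      rcases hPerm (!q) x s.2 hx with hx' | ⟨hqp, hxa, hobl⟩
      · have hsp := hP' x hx'
        cases x with
        | pos b =>
          intro hbG
          obtain ⟨A, hA, A', hA', hb, hv⟩ := hsp hbG
          exact ⟨A, hA, A', hA', hb, hviable _ _ _ hv⟩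
        | neg b =>
          intro hbG
          obtain ⟨A, hA, A', hA', hb, hv⟩ := hsp hbG
          exact ⟨A, hA, A', hA', hb, hviable _ _ _ hv⟩
      · subst hxa
        intro _
        obtain ⟨A, hA, A', hA', hv⟩ := hO'
        refine ⟨A, hA, A', hA', ?_, hviable _ _ _ hv⟩
        intro haA
        have haf : a ∈ ca'.forb (!q) s.2 := by
          show Clause.obl (!q) (.neg a) ∈ ca'.contract s.2
          rw [hqp]; exact hobl
        have : a ∈ ca'.forb (!q) s.2 ∩ (A ∪ A') := ⟨haf, Or.inl haA⟩
        rw [hv.2] at this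
        exact this
    · obtain ⟨A, hA, A', hA', hv⟩ := hO'
      exact ⟨A, hA, A', hA', hviable _ _ _ hv⟩
  · -- transitions
    intro s hs A s' ht hasync
    have hs' : s ∈ behReach ca' S1 S2 G := hbr ▸ hs
    have ht' : behTrans ca' S1 S2 G s A s' := hbt ▸ ht
    exact hviable _ _ _ (hbiT s hs' A s' ht' hasync)

end TwoParty
end

section
/- Obligation to perform conflicts with obligation not to perform: for every party p and every extended action x ∈ Σ!, 𝒪_p(x) ✗ 𝒪_p(!x). (This follows from the conflict 𝒪_p(x) ✗ 𝒫_p(!x), the strictness 𝒫_p(!x) ⊑ 𝒪_p(!x), and closure of conflict under increased strictness.) -/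
namespace TwoParty

/-- Obligations of `ca` are preserved when a permission is replaced by an obligation. -/
lemma obl_mem_of_replace {Act QA : Type} {p0 : Party} {y : ExtAct Act}
    {ca ca' : CA Act QA} (h : Replace (.perm p0 y) (.obl p0 y) ca ca')
    {p : Party} {z : ExtAct Act} {q : QA}
    (hz : Clause.obl p z ∈ ca.contract q) : Clause.obl p z ∈ ca'.contract q := by
  rcases h.2 q with hq | ⟨_, hq⟩
  · rwa [hq]
  · rw [hq]
    exact Set.mem_insert_of_mem _ ⟨hz, by simp⟩

/-- Viability under the stricter contract implies viability under the original one. -/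
lemma viable_of_replace {Act QA : Type} {p0 : Party} {y : ExtAct Act}
    {ca ca' : CA Act QA} (h : Replace (.perm p0 y) (.obl p0 y) ca ca')
    (p : Party) (q : QA) (A : Set Act) (hv : ca'.viable p q A) : ca.viable p q A := by
  obtain ⟨h1, h2⟩ := hv
  refine ⟨fun a ha => h1 (obl_mem_of_replace h ha), ?_⟩
  rw [Set.eq_empty_iff_forall_notMem] at h2 ⊢
  intro a ⟨hf, haA⟩
  exact h2 a ⟨obl_mem_of_replace h hf, haA⟩

/-- Strictness `𝒫_p(y) ⊑ 𝒪_p(y)`. -/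
lemma perm_le_obl {Act : Type} (p0 : Party) (y : ExtAct Act) :
    clauseLE (Clause.perm p0 y) (Clause.obl p0 y) := by
  intro QA ca ca' hrep p Q1 Q2 S1 S2 G _ hbi'
  have hreach : behReach ca S1 S2 G = behReach ca' S1 S2 G := by
    unfold behReach behTrans
    rw [hrep.1.1, hrep.1.2]
  constructor
  · intro s hs
    have hs' : s ∈ behReach ca' S1 S2 G := hreach ▸ hs
    obtain ⟨hperm', hobl'⟩ := hbi'.1 s hs'
    constructor
    · intro x hx
      by_cases hmem : Clause.perm (!p) x ∈ ca'.contract s.2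
      · have hsat := hperm' x hmem
        cases x with
        | pos a =>
          intro haG
          obtain ⟨A, hA, A', hA', ha, hv⟩ := hsat haG
          exact ⟨A, hA, A', hA', ha, viable_of_replace hrep _ _ _ hv⟩
        | neg a =>
          intro haG
          obtain ⟨A, hA, A', hA', ha, hv⟩ := hsat haG
          exact ⟨A, hA, A', hA', ha, viable_of_replace hrep _ _ _ hv⟩
      · rcases hrep.2 s.2 with hq | ⟨_, hq⟩
        · rw [hq] at hmem; exact absurd hx hmem
        · have hx' : Clause.perm (!p) x = Clause.perm p0 y := by
            by_contra hne
            exact hmem (hq ▸ Set.mem_insert_of_mem _ ⟨hx, by simpa using hne⟩)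
          injection hx' with hp hy
          have hobl_mem : Clause.obl (!p) x ∈ ca'.contract s.2 := by
            rw [hq, hp, hy]; exact Set.mem_insert _ _
          obtain ⟨A, hA, A', hA', hv⟩ := hobl'
          cases x with
          | pos a =>
            intro haG
            refine ⟨A, hA, A', hA', ?_, viable_of_replace hrep _ _ _ hv⟩
            rcases hv.1 hobl_mem with h | h
            · exact h
            · exact absurd haG (hA' h)
          | neg a =>
            intro haG
            refine ⟨A, hA, A', hA', ?_, viable_of_replace hrep _ _ _ hv⟩
            intro haA
            have hmem2 : a ∈ ca'.forb (!p) s.2 ∩ (A ∪ A') := ⟨hobl_mem, Or.inl haA⟩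
            rw [hv.2] at hmem2
            exact hmem2
    · obtain ⟨A, hA, A', hA', hv⟩ := hobl'
      exact ⟨A, hA, A', hA', viable_of_replace hrep _ _ _ hv⟩
  · intro s hs A s' htr hnasync
    have hs' : s ∈ behReach ca' S1 S2 G := hreach ▸ hs
    have htr' : behTrans ca' S1 S2 G s A s' := by
      refine ⟨htr.1, ?_⟩
      rw [← hrep.1.2]
      exact htr.2
    exact viable_of_replace hrep _ _ _ (hbi'.2 s hs' A s' htr' hnasync)

/-- obligation to perform conflicts with obligation not to perform:
`𝒪_p(x) ✗ 𝒪_p(!x)` for every party `p` and extended action `x`. -/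
theorem conflict_obl_obl_not (Act : Type) (mx : Act → Act → Prop)
    (p : Party) (x : ExtAct Act) :
    Conflict mx (Clause.obl p x) (Clause.obl p (negExt x)) := by
  cases x with
  | pos a =>
    exact Conflict.strict (Conflict.symm (Conflict.perm_neg (mx := mx) p (ExtAct.neg a)))
      (perm_le_obl p (ExtAct.neg a))
  | neg a =>
    exact Conflict.strict (Conflict.symm (Conflict.perm_neg (mx := mx) p (ExtAct.pos a)))
      (perm_le_obl p (ExtAct.pos a))

end TwoParty
end

section
/- Obligation to perform an action conflicts with lack of permission to perform it: for every party p and every extended action x ∈ Σ!, 𝒪_p(x) ✗ !𝒫_p(x). -/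
namespace TwoParty

lemma negExt_negExt {Act : Type} (x : ExtAct Act) : negExt (negExt x) = x := by
  cases x <;> rfl

/-- Obligation is stricter than permission: `𝒫_p(y) ⊑ 𝒪_p(y)`. -/
lemma permLE_obl {Act : Type} (p : Party) (y : ExtAct Act) :
    clauseLE (Clause.perm p y) (Clause.obl p y) := by
  rintro QA ca ca' ⟨⟨hinit, htrans⟩, hrepl⟩ p' Q1 Q2 S1 S2 G _hwf ⟨hbiS, hbiT⟩
  -- reachability coincides
  have hreach : behReach ca S1 S2 G = behReach ca' S1 S2 G := by
    unfold behReach behTrans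
    rw [hinit, htrans]
  -- obligations/forbiddances only grow
  have hoblig : ∀ pp q, ca.oblig pp q ⊆ ca'.oblig pp q := by
    intro pp q a ha
    rcases hrepl q with h | ⟨_, h⟩
    · rw [CA.oblig, Set.mem_setOf_eq, h]; exact ha
    · rw [CA.oblig, Set.mem_setOf_eq, h]
      exact Set.mem_insert_iff.mpr (Or.inr ⟨ha, by simp⟩)
  have hforb : ∀ pp q, ca.forb pp q ⊆ ca'.forb pp q := by
    intro pp q a ha
    rcases hrepl q with h | ⟨_, h⟩
    · rw [CA.forb, Set.mem_setOf_eq, h]; exact ha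
    · rw [CA.forb, Set.mem_setOf_eq, h]
      exact Set.mem_insert_iff.mpr (Or.inr ⟨ha, by simp⟩)
  have hviable : ∀ pp q A, ca'.viable pp q A → ca.viable pp q A := by
    rintro pp q A ⟨h1, h2⟩
    refine ⟨(hoblig pp q).trans h1, Set.eq_empty_iff_forall_notMem.mpr ?_⟩
    rintro a ⟨ha1, ha2⟩
    exact (Set.eq_empty_iff_forall_notMem.mp h2) a ⟨hforb pp q ha1, ha2⟩
  constructor
  · -- state satisfaction
    intro s hs
    have hs' : s ∈ behReach ca' S1 S2 G := hreach ▸ hs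
    obtain ⟨hperm', hob'⟩ := hbiS s hs'
    refine ⟨?_, ?_⟩
    · intro z hz
      rcases hrepl s.2 with heq | ⟨hC, heq⟩
      · -- contracts coincide at s.2
        have hz' : Clause.perm (!p') z ∈ ca'.contract s.2 := heq ▸ hz
        have := hperm' z hz'
        cases z with
        | pos a =>
          intro haG
          obtain ⟨A, hA, A', hA'G, haA, hv⟩ := this haG
          exact ⟨A, hA, A', hA'G, haA, hviable _ _ _ hv⟩
        | neg a =>
          intro haG
          obtain ⟨A, hA, A', hA'G, haA, hv⟩ := this haG
          exact ⟨A, hA, A', hA'G, haA, hviable _ _ _ hv⟩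
      · by_cases hcase : Clause.perm (!p') z = Clause.perm p y
        · -- z is the removed permission; use the obligation part under ca'
          injection hcase with hp hzy
          subst hzy
          have hmemo : Clause.obl (!p') z ∈ ca'.contract s.2 := by
            rw [heq, hp]; exact Set.mem_insert _ _
          obtain ⟨A, hA, A', hA'G, hv⟩ := hob'
          cases z with
          | pos a =>
            intro haG
            have haO : a ∈ ca'.oblig (!p') s.2 := hmemo
            have haAA' : a ∈ A ∪ A' := hv.1 haO
            have haA : a ∈ A := by
              rcases haAA' with h | h
              · exact h
              · exact absurd haG (hA'G h)
            exact ⟨A, hA, A', hA'G, haA, hviable _ _ _ hv⟩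
          | neg a =>
            intro haG
            have haF : a ∈ ca'.forb (!p') s.2 := hmemo
            have haA : a ∉ A := by
              intro h
              exact (Set.eq_empty_iff_forall_notMem.mp hv.2) a ⟨haF, Or.inl h⟩
            exact ⟨A, hA, A', hA'G, haA, hviable _ _ _ hv⟩
        · -- z is a different permission, still present in ca'
          have hz' : Clause.perm (!p') z ∈ ca'.contract s.2 := by
            rw [heq]
            exact Set.mem_insert_iff.mpr (Or.inr ⟨hz, hcase⟩)
          have := hperm' z hz'
          cases z with
          | pos a =>
            intro haG
            obtain ⟨A, hA, A', hA'G, haA, hv⟩ := this haG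
            exact ⟨A, hA, A', hA'G, haA, hviable _ _ _ hv⟩
          | neg a =>
            intro haG
            obtain ⟨A, hA, A', hA'G, haA, hv⟩ := this haG
            exact ⟨A, hA, A', hA'G, haA, hviable _ _ _ hv⟩
    · obtain ⟨A, hA, A', hA'G, hv⟩ := hob'
      exact ⟨A, hA, A', hA'G, hviable _ _ _ hv⟩
  · -- transition satisfaction
    intro s hs A s' ht hna
    have hs' : s ∈ behReach ca' S1 S2 G := hreach ▸ hs
    have ht' : behTrans ca' S1 S2 G s A s' := by
      unfold behTrans at ht ⊢
      rw [← htrans]; exact ht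
    exact hviable _ _ _ (hbiT s hs' A s' ht' hna)

/-- obligation to perform an action conflicts with lack of
permission to perform it: `𝒪_p(x) ✗ !𝒫_p(x)` for every party `p` and extended
action `x`. -/
theorem conflict_obl_negPerm (Act : Type) (mx : Act → Act → Prop)
    (p : Party) (x : ExtAct Act) :
    Conflict mx (Clause.obl p x) (negClause (Clause.perm p x)) := by
  show Conflict mx (Clause.obl p x) (Clause.obl p (negExt x))
  have h1 : Conflict mx (Clause.perm p (negExt x)) (Clause.obl p x) := by
    have := Conflict.perm_neg (mx := mx) p (negExt x)
    rwa [show negClause (Clause.perm p (negExt x)) = Clause.obl p x from by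
      simp [negClause, negExt_negExt]] at this
  exact Conflict.strict h1.symm (permLE_obl p (negExt x))

end TwoParty
end
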